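/- For every p ∈ (1,2) there exists θ* ∈ (0, π) such that for all θ₀ ∈ (0, θ*], the circular arc y : [0,1] → ℝ², y_t = (cos(tθ₀), sin(tθ₀)), satisfies ‖y‖_{p-var} = |y_1 − y_0| = 2 sin(θ₀/2), i.e. the p-variation of the arc equals the length of its chord. -/

import Mathlib

open Real

/-- The `p`-variation of a path `z : [0,1] → ℝ²`: the supremum, over all finite partitions
`0 = t_0 < t_1 < ⋯ < t_n = 1`, of `(∑ |z_{t_i} - z_{t_{i-1}}|^p)^{1/p}`. -/
noncomputable def pVar (p : ℝ) (z : ℝ → EuclideanSpace ℝ (Fin 2)) : ℝ :=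
  sSup {v : ℝ | ∃ (n : ℕ) (t : Fin (n + 1) → ℝ), StrictMono t ∧ t 0 = 0 ∧
    t (Fin.last n) = 1 ∧
    v = (∑ k : Fin n, ‖z (t k.succ) - z (t k.castSucc)‖ ^ p) ^ (1 / p)}

/-- The circular arc `y_t = (cos(tθ₀), sin(tθ₀))` on the unit circle. -/
noncomputable def arcPath (θ₀ : ℝ) (t : ℝ) : EuclideanSpace ℝ (Fin 2) :=
  (WithLp.equiv 2 (Fin 2 → ℝ)).symm ![cos (t * θ₀), sin (t * θ₀)]

open Set

/-! The function `f = sin ^ p` has `f'' = p sin ^ (p - 2) (p cos² - 1)`, so it is convex on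
`[0, arccos p^(-1/2)]`; as `f 0 = 0`, convexity gives `f (t α) ≤ t f α` for `t ∈ [0, 1]`.
The chord of the arc between parameters `r ≤ s` has length `2 sin ((s - r) θ₀ / 2)`, so when
`θ₀ / 2` lies in that interval the `p`-th powers of the chords of any partition sum to at most
the `p`-th power of the full chord, which the trivial partition attains. -/

theorem Fin.sum_succ_sub_castSucc {M : Type*} [AddCommGroup M] {n : ℕ} (f : Fin (n + 1) → M) :
    ∑ k : Fin n, (f k.succ - f k.castSucc) = f (Fin.last n) - f 0 := by
  induction n with
  | zero => simp
  | succ n ih =>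
    rw [Fin.sum_univ_castSucc]
    simp only [Fin.succ_castSucc]
    rw [ih (fun k => f k.castSucc)]
    simp

theorem ConvexOn.map_smul_le_of_map_zero {E : Type*} [AddCommGroup E] [Module ℝ E] {s : Set E}
    {f : E → ℝ} (hf : ConvexOn ℝ s f) (h0 : (0 : E) ∈ s) (hf0 : f 0 = 0) {x : E} (hx : x ∈ s)
    {t : ℝ} (ht0 : 0 ≤ t) (ht1 : t ≤ 1) : f (t • x) ≤ t * f x := by
  simpa [hf0] using hf.2 h0 hx (sub_nonneg.2 ht1) ht0 (by ring)

theorem convexOn_sin_rpow {p : ℝ} (hp : 1 ≤ p) :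
    ConvexOn ℝ (Icc 0 (arccos √p⁻¹)) (fun x => sin x ^ p) := by
  have hp0 : 0 < p := by linarith
  have ha : arccos √p⁻¹ < π / 2 := arccos_lt_pi_div_two.2 (by positivity)
  refine convexOn_of_hasDerivWithinAt2_nonneg (convex_Icc _ _)
    (f' := fun x => p * sin x ^ (p - 1) * cos x)
    (f'' := fun x => p * sin x ^ (p - 2) * (p * cos x ^ 2 - 1)) ?_ ?_ ?_ ?_
  · exact continuousOn_sin.rpow_const fun _ _ => Or.inr hp0.le
  all_goals
    rw [interior_Icc]
    rintro x ⟨hx0, hxa⟩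
    have hsin : 0 < sin x := sin_pos_of_pos_of_lt_pi hx0 (by linarith [pi_pos])
  · exact ((hasDerivAt_sin x).rpow_const (Or.inl hsin.ne')).hasDerivWithinAt.congr_deriv
      (by ring)
  · have h := (((hasDerivAt_sin x).rpow_const (p := p - 1) (Or.inl hsin.ne')).const_mul p).mul
      (hasDerivAt_cos x)
    refine h.hasDerivWithinAt.congr_deriv ?_
    have : sin x ^ (p - 1) = sin x ^ (p - 2) * sin x := by
      rw [← rpow_add_one hsin.ne']; ring_nf
    rw [this, sub_sub, show (1 : ℝ) + 1 = 2 by norm_num]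
    linear_combination (-(p * sin x ^ (p - 2))) * sin_sq_add_cos_sq x
  · have hcos : √p⁻¹ < cos x := by
      rw [← cos_arccos (by linarith [sqrt_nonneg p⁻¹])
        (sqrt_le_one.2 (inv_le_one_of_one_le₀ hp))]
      exact cos_lt_cos_of_nonneg_of_le_pi hx0.le (by linarith [pi_pos]) hxa
    have : 1 ≤ p * cos x ^ 2 := by
      have := pow_le_pow_left₀ (by positivity) hcos.le 2
      rw [sq_sqrt (by positivity)] at this
      rwa [← inv_mul_le_iff₀ hp0, mul_one]
    exact mul_nonneg (by positivity) (by linarith)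

theorem sin_mul_rpow_le {p α t : ℝ} (hp : 1 ≤ p) (hα : α ∈ Icc 0 (arccos √p⁻¹)) (ht0 : 0 ≤ t)
    (ht1 : t ≤ 1) : sin (t * α) ^ p ≤ t * sin α ^ p :=
  (convexOn_sin_rpow hp).map_smul_le_of_map_zero (left_mem_Icc.2 (hα.1.trans hα.2))
    (by simp [zero_rpow (by linarith : p ≠ 0)]) hα ht0 ht1

theorem pVar_eq_norm_sub_of_rpow_le {p : ℝ} (hp : 0 < p) {z : ℝ → EuclideanSpace ℝ (Fin 2)}
    (hz : ∀ r s, 0 ≤ r → r ≤ s → s ≤ 1 → ‖z s - z r‖ ^ p ≤ (s - r) * ‖z 1 - z 0‖ ^ p) :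
    pVar p z = ‖z 1 - z 0‖ := by
  have root : (‖z 1 - z 0‖ ^ p) ^ (1 / p) = ‖z 1 - z 0‖ := by
    rw [one_div, rpow_rpow_inv (norm_nonneg _) hp.ne']
  have le_chord (n : ℕ) (t : Fin (n + 1) → ℝ) (ht : StrictMono t) (ht0 : t 0 = 0)
      (ht1 : t (Fin.last n) = 1) :
      (∑ k : Fin n, ‖z (t k.succ) - z (t k.castSucc)‖ ^ p) ^ (1 / p) ≤ ‖z 1 - z 0‖ := by
    have hsum : ∑ k : Fin n, ‖z (t k.succ) - z (t k.castSucc)‖ ^ p ≤ ‖z 1 - z 0‖ ^ p :=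
      calc ∑ k : Fin n, ‖z (t k.succ) - z (t k.castSucc)‖ ^ p
          ≤ ∑ k : Fin n, (t k.succ - t k.castSucc) * ‖z 1 - z 0‖ ^ p := by
            refine Finset.sum_le_sum fun k _ => hz _ _ ?_ ?_ ?_
            · exact ht0 ▸ ht.monotone (Fin.zero_le _)
            · exact ht.monotone (Fin.castSucc_le_succ k)
            · exact ht1 ▸ ht.monotone (Fin.le_last _)
        _ = ‖z 1 - z 0‖ ^ p := by
            rw [← Finset.sum_mul, Fin.sum_succ_sub_castSucc, ht0, ht1, sub_zero, one_mul]
    calc _ ≤ (‖z 1 - z 0‖ ^ p) ^ (1 / p) :=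
          rpow_le_rpow (Finset.sum_nonneg fun _ _ => by positivity) hsum (by positivity)
      _ = ‖z 1 - z 0‖ := root
  have two_point : ‖z 1 - z 0‖ ∈ {v : ℝ | ∃ (n : ℕ) (t : Fin (n + 1) → ℝ), StrictMono t ∧
      t 0 = 0 ∧ t (Fin.last n) = 1 ∧
      v = (∑ k : Fin n, ‖z (t k.succ) - z (t k.castSucc)‖ ^ p) ^ (1 / p)} :=
    ⟨1, fun i => (i : ℕ), Nat.strictMono_cast.comp Fin.val_strictMono, by simp, by simp,
      by simpa using root.symm⟩
  refine le_antisymm (csSup_le ⟨_, two_point⟩ ?_) (le_csSup ⟨‖z 1 - z 0‖, ?_⟩ two_point) <;>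
    rintro _ ⟨n, t, ht, ht0, ht1, rfl⟩ <;> exact le_chord n t ht ht0 ht1

theorem norm_arcPath_sub (θ r s : ℝ) :
    ‖arcPath θ s - arcPath θ r‖ = 2 * |sin ((s - r) * θ / 2)| := by
  have half : cos ((s - r) * θ) = 1 - 2 * sin ((s - r) * θ / 2) ^ 2 := by
    rw [← cos_two_mul_eq_one_sub]; ring_nf
  have sq : ‖arcPath θ s - arcPath θ r‖ ^ 2 = (2 * sin ((s - r) * θ / 2)) ^ 2 := by
    rw [EuclideanSpace.norm_sq_eq, Fin.sum_univ_two]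
    simp only [arcPath, PiLp.sub_apply, WithLp.equiv_symm_apply, Matrix.cons_val_zero,
      Matrix.cons_val_one, Real.norm_eq_abs, sq_abs]
    have := cos_sub (s * θ) (r * θ)
    rw [← sub_mul] at this
    linear_combination
      sin_sq_add_cos_sq (s * θ) + sin_sq_add_cos_sq (r * θ) + 2 * this - 2 * half
  simpa only [abs_norm, abs_mul, abs_two] using (sq_eq_sq_iff_abs_eq_abs _ _).1 sq

theorem norm_arcPath_sub_rpow_le {p θ r s : ℝ} (hp : 1 ≤ p) (hθ : θ / 2 ∈ Icc 0 (arccos √p⁻¹))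
    (hr : 0 ≤ r) (hrs : r ≤ s) (hs : s ≤ 1) :
    ‖arcPath θ s - arcPath θ r‖ ^ p ≤ (s - r) * ‖arcPath θ 1 - arcPath θ 0‖ ^ p := by
  have hsin : ∀ t ∈ Icc (0 : ℝ) 1, 0 ≤ sin (t * (θ / 2)) := fun t ht =>
    sin_nonneg_of_nonneg_of_le_pi (mul_nonneg ht.1 hθ.1)
      (by nlinarith [ht.2, hθ.1, hθ.2, arccos_le_pi √p⁻¹])
  have hu : s - r ∈ Icc (0 : ℝ) 1 := ⟨by linarith, by linarith⟩
  have h1 := hsin _ hu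
  have h2 : 0 ≤ sin (θ / 2) := by simpa using hsin 1 (right_mem_Icc.2 zero_le_one)
  rw [norm_arcPath_sub, norm_arcPath_sub, sub_zero, one_mul, mul_div_assoc, abs_of_nonneg h1,
    abs_of_nonneg h2, mul_rpow zero_le_two h1, mul_rpow zero_le_two h2]
  calc 2 ^ p * sin ((s - r) * (θ / 2)) ^ p ≤ 2 ^ p * ((s - r) * sin (θ / 2) ^ p) :=
        mul_le_mul_of_nonneg_left (sin_mul_rpow_le hp hθ hu.1 hu.2) (by positivity)
    _ = (s - r) * (2 ^ p * sin (θ / 2) ^ p) := by ring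

/-- For `p ∈ (1,2)` there is `θ* ∈ (0,π)` such that for all `θ₀ ∈ (0,θ*]`, the
`p`-variation of the circular arc of central angle `θ₀` equals the length of its chord:
`‖y‖_{p-var} = |y_1 - y_0| = 2 sin(θ₀/2)`. -/
theorem arc_pVariation_eq_chord (p : ℝ) (hp : p ∈ Set.Ioo (1 : ℝ) 2) :
    ∃ θs ∈ Set.Ioo (0 : ℝ) π, ∀ θ₀ ∈ Set.Ioc (0 : ℝ) θs,
      pVar p (arcPath θ₀) = ‖arcPath θ₀ 1 - arcPath θ₀ 0‖ ∧
      pVar p (arcPath θ₀) = 2 * sin (θ₀ / 2) := by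
  obtain ⟨hp1, -⟩ := hp
  have ha0 : 0 < arccos √p⁻¹ :=
    arccos_pos.2 ((sqrt_lt' one_pos).2 (by simpa using inv_lt_one_of_one_lt₀ hp1))
  have ha : arccos √p⁻¹ < π / 2 := arccos_lt_pi_div_two.2 (by positivity)
  refine ⟨2 * arccos √p⁻¹, ⟨by positivity, by linarith⟩, fun θ₀ ⟨hθ0, hθ⟩ => ?_⟩
  have hα : θ₀ / 2 ∈ Icc 0 (arccos √p⁻¹) := ⟨by positivity, by linarith⟩
  have chord : ‖arcPath θ₀ 1 - arcPath θ₀ 0‖ = 2 * sin (θ₀ / 2) := by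
    rw [norm_arcPath_sub, sub_zero, one_mul,
      abs_of_nonneg (sin_nonneg_of_nonneg_of_le_pi hα.1 (by linarith))]
  have hvar : pVar p (arcPath θ₀) = ‖arcPath θ₀ 1 - arcPath θ₀ 0‖ :=
    pVar_eq_norm_sub_of_rpow_le (by linarith) fun r s hr hrs hs =>
      norm_arcPath_sub_rpow_le hp1.le hα hr hrs hs
  exact ⟨hvar, hvar.trans chord⟩
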